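/- arXiv:0811.3302 — 7 statements merged into one kernel-verified Lean document; each statement's English description precedes it below -/
import Mathlib

section
/- For each digit d ∈ {1,…,9}, the generalized Benford probability tends to the Benford probability as α → 1: the limit of ((d+1)^{1−α} − d^{1−α})/(10^{1−α} − 1) as α tends to 1 (with α ≠ 1) equals log₁₀(1 + 1/d). -/
/-! The numerator and denominator both vanish at `α = 1`. Dividing each by `1 - α` turns them
into difference quotients of `t ↦ a ^ t` at `t = 0`, whose limit is `log a`; hence the ratio tends
to `(log (d + 1) - log d) / log 10 = log₁₀ (1 + 1/d)`. -/

open Real Filter Topology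

namespace Real

theorem tendsto_rpow_sub_one_div {a : ℝ} (ha : 0 < a) :
    Tendsto (fun t : ℝ => (a ^ t - 1) / t) (𝓝[≠] 0) (𝓝 (log a)) := by
  have hslope := hasDerivAt_iff_tendsto_slope.mp (hasStrictDerivAt_const_rpow ha 0).hasDerivAt
  rw [rpow_zero, one_mul] at hslope
  refine hslope.congr fun t => ?_
  rw [slope_def_field, rpow_zero, sub_zero]

theorem tendsto_rpow_sub_rpow_div_rpow_sub_one {a b c : ℝ} (ha : 0 < a) (hb : 0 < b) (hc₀ : 0 < c)
    (hc₁ : c ≠ 1) :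
    Tendsto (fun t : ℝ => (a ^ t - b ^ t) / (c ^ t - 1)) (𝓝[≠] 0) (𝓝 (logb c (a / b))) := by
  have hlogc : log c ≠ 0 := log_ne_zero_of_pos_of_ne_one hc₀ hc₁
  have hquot := ((tendsto_rpow_sub_one_div ha).sub (tendsto_rpow_sub_one_div hb)).div
    (tendsto_rpow_sub_one_div hc₀) hlogc
  rw [logb, log_div ha.ne' hb.ne']
  refine hquot.congr' (eventually_nhdsWithin_of_forall fun t (ht : t ≠ 0) => ?_)
  dsimp only [Pi.div_apply]
  rw [div_sub_div_same, sub_sub_sub_cancel_right, div_div_div_cancel_right₀ ht]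

end Real

theorem tendsto_const_sub_nhdsNE {G : Type*} [AddGroup G] [TopologicalSpace G]
    [IsTopologicalAddGroup G] (a : G) : Tendsto (fun x : G => a - x) (𝓝[≠] a) (𝓝[≠] 0) :=
  tendsto_nhdsWithin_iff.mpr
    ⟨((continuous_const.sub continuous_id).tendsto' a 0 (sub_self a)).mono_left
        nhdsWithin_le_nhds,
      eventually_nhdsWithin_of_forall fun _ hx => sub_ne_zero.mpr (Ne.symm hx)⟩

/-- For each digit `d ∈ {1,…,9}`, the generalized Benford probability tends to
the Benford probability `log₁₀ (1 + 1/d)` as `α → 1` with `α ≠ 1`. -/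
theorem gbl_tendsto_benford (d : ℕ) (hd : d ∈ Finset.Icc 1 9) :
    Tendsto (fun α : ℝ =>
        (((d : ℝ) + 1) ^ (1 - α) - (d : ℝ) ^ (1 - α)) / ((10 : ℝ) ^ (1 - α) - 1))
      (𝓝[≠] 1) (𝓝 (Real.logb 10 (1 + 1 / (d : ℝ)))) := by
  have hd₀ : (0 : ℝ) < d := by exact_mod_cast (Finset.mem_Icc.mp hd).1
  rw [show 1 + 1 / (d : ℝ) = (d + 1) / d by field_simp]
  exact (Real.tendsto_rpow_sub_rpow_div_rpow_sub_one (by positivity) hd₀ (by norm_num)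
    (by norm_num)).comp (tendsto_const_sub_nhdsNE 1)
end

section
/- Let 0 ≤ α < 1 and D ∈ ℕ, and let T be a real random variable whose law has density f_T(t) = ((1−α)/(10^{(D+1)(1−α)} − 1)) · t^{−α} on [1, 10^{D+1}] (and 0 elsewhere) with respect to Lebesgue measure. Then for every digit d ∈ {1,…,9}, the probability that the first significant digit of T equals d is ((d+1)^{1−α} − d^{1−α})/(10^{1−α} − 1); that is, T follows the generalized Benford law with exponent α. -/
open Real MeasureTheory Set

/-! On `[b^j, b^(j+1))` the first digit of `t` in base `b` is `⌊t / b^j⌋`, so the digit-`d` part of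
`[1, b^n)` is the disjoint union of the blocks `[d b^j, (d+1) b^j)`, `j < n`. Since
`∫ t^(-α)` over `[s a, s b)` is `s^(1-α)` times the integral over `[a, b)`, the block masses form a
geometric progression of ratio `b^(1-α)`; summing it, the normalising constant of the density
cancels and leaves the generalized Benford probability. -/

noncomputable def firstDigit (b t : ℝ) : ℤ := ⌊t / b ^ ⌊logb b t⌋⌋

theorem measurable_firstDigit (b : ℝ) : Measurable (firstDigit b) :=
  (measurable_id.div ((measurable_of_countable (b ^ · : ℤ → ℝ)).comp
    (measurable_log.div_const _).floor)).floor

theorem floor_logb_eq_of_mem_Ico {b t : ℝ} (hb : 1 < b) {j : ℕ}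
    (ht : t ∈ Ico (b ^ j) (b ^ (j + 1))) : ⌊logb b t⌋ = j := by
  have ht₀ : 0 < t := (pow_pos (zero_lt_one.trans hb) j).trans_le ht.1
  rw [Int.floor_eq_iff, le_logb_iff_rpow_le hb ht₀, logb_lt_iff_lt_rpow hb ht₀]
  exact_mod_cast ht

theorem firstDigit_eq_iff_of_mem_Ico {b t : ℝ} (hb : 1 < b) {j : ℕ} {d : ℤ}
    (ht : t ∈ Ico (b ^ j) (b ^ (j + 1))) :
    firstDigit b t = d ↔ t ∈ Ico (d * b ^ j) ((d + 1) * b ^ j) := by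
  have hbj : 0 < b ^ j := pow_pos (zero_lt_one.trans hb) j
  rw [firstDigit, floor_logb_eq_of_mem_Ico hb ht, zpow_natCast, Int.floor_eq_iff, mem_Ico,
    le_div_iff₀ hbj, div_lt_iff₀ hbj]

theorem Ico_digit_subset_Ico_pow {b : ℝ} {d : ℤ} (hd : 1 ≤ d) (hdb : (d : ℝ) + 1 ≤ b) (j : ℕ) :
    Ico (d * b ^ j) ((d + 1) * b ^ j) ⊆ Ico (b ^ j) (b ^ (j + 1)) := by
  have hd' : (1 : ℝ) ≤ d := by exact_mod_cast hd
  have hbj : 0 ≤ b ^ j := pow_nonneg (by linarith) j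
  refine Ico_subset_Ico ?_ ?_
  · exact le_mul_of_one_le_left hbj hd'
  · rw [pow_succ']
    exact mul_le_mul_of_nonneg_right hdb hbj

theorem firstDigit_preimage_inter_Ico_one_pow {b : ℝ} (hb : 1 < b) {d : ℤ} (hd : 1 ≤ d)
    (hdb : (d : ℝ) + 1 ≤ b) (n : ℕ) :
    {t | firstDigit b t = d} ∩ Ico 1 (b ^ n) =
      ⋃ j ∈ Finset.range n, Ico (d * b ^ j) ((d + 1) * b ^ j) := by
  ext t
  simp only [mem_inter_iff, mem_ofPred_eq, mem_iUnion, Finset.mem_range, exists_prop]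
  constructor
  · rintro ⟨hdigit, ht₁, htn⟩
    obtain ⟨j, hj⟩ := exists_nat_pow_near ht₁ hb
    exact ⟨j, (pow_lt_pow_iff_right₀ hb).1 (hj.1.trans_lt htn),
      (firstDigit_eq_iff_of_mem_Ico hb hj).1 hdigit⟩
  · rintro ⟨j, hjn, htj⟩
    have hj := Ico_digit_subset_Ico_pow hd hdb j htj
    exact ⟨(firstDigit_eq_iff_of_mem_Ico hb hj).2 htj, (one_le_pow₀ hb.le).trans hj.1,
      hj.2.trans_le (pow_le_pow_right₀ hb.le hjn)⟩

theorem pairwiseDisjoint_Ico_digit {b : ℝ} (hb : 1 < b) {d : ℤ} (hd : 1 ≤ d)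
    (hdb : (d : ℝ) + 1 ≤ b) (s : Set ℕ) :
    s.PairwiseDisjoint fun j => Ico (d * b ^ j) ((d + 1) * b ^ j) :=
  ((pow_right_mono₀ hb.le).pairwise_disjoint_on_Ico_succ.set_pairwise s).mono'
    fun _ _ h => h.mono (Ico_digit_subset_Ico_pow hd hdb _) (Ico_digit_subset_Ico_pow hd hdb _)

theorem setLIntegral_Ico_rpow_neg {α : ℝ} (hα : α < 1) {a b : ℝ} (ha : 0 < a) (hab : a ≤ b) :
    ∫⁻ t in Ico a b, ENNReal.ofReal (t ^ (-α)) =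
      ENNReal.ofReal ((b ^ (1 - α) - a ^ (1 - α)) / (1 - α)) := by
  have hcont : ContinuousOn (fun t : ℝ => t ^ (-α)) (Icc a b) :=
    continuousOn_id.rpow_const fun t ht => Or.inl (ha.trans_le ht.1).ne'
  rw [setLIntegral_congr Ico_ae_eq_Ioc, ← ofReal_integral_eq_lintegral_ofReal
    (hcont.integrableOn_Icc.mono_set Ioc_subset_Icc_self)
    ((ae_restrict_mem measurableSet_Ioc).mono fun t ht => rpow_nonneg (ha.trans ht.1).le _),
    ← intervalIntegral.integral_of_le hab, integral_rpow (Or.inl (by linarith))]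
  ring_nf

theorem setLIntegral_firstDigit_rpow_neg {b α : ℝ} (hb : 1 < b) (hα : α < 1) {d : ℤ}
    (hd : 1 ≤ d) (hdb : (d : ℝ) + 1 ≤ b) (n : ℕ) :
    ∫⁻ t in {t | firstDigit b t = d} ∩ Ico 1 (b ^ n), ENNReal.ofReal (t ^ (-α)) =
      ENNReal.ofReal (((d + 1) ^ (1 - α) - d ^ (1 - α)) / (1 - α) *
        (((b ^ (1 - α)) ^ n - 1) / (b ^ (1 - α) - 1))) := by
  have hd₀ : (0 : ℝ) < d := by exact_mod_cast hd
  have hb₀ : 0 ≤ b := by linarith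
  have hblock : ∀ j : ℕ, ∫⁻ t in Ico (d * b ^ j) ((d + 1) * b ^ j), ENNReal.ofReal (t ^ (-α)) =
      ENNReal.ofReal (((d + 1) ^ (1 - α) - d ^ (1 - α)) / (1 - α) * (b ^ (1 - α)) ^ j) := by
    intro j
    have hbj : 0 < b ^ j := pow_pos (by linarith) j
    rw [setLIntegral_Ico_rpow_neg hα (by positivity) (by nlinarith),
      mul_rpow (by linarith) hbj.le, mul_rpow hd₀.le hbj.le, ← rpow_pow_comm hb₀]
    ring_nf
  have hmass : 0 ≤ ((d + 1) ^ (1 - α) - d ^ (1 - α)) / (1 - α) :=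
    div_nonneg (sub_nonneg.2 (rpow_le_rpow hd₀.le (by linarith) (by linarith)))
      (by linarith)
  rw [firstDigit_preimage_inter_Ico_one_pow hb hd hdb,
    lintegral_biUnion_finset (pairwiseDisjoint_Ico_digit hb hd hdb _)
      (fun _ _ => measurableSet_Ico),
    Finset.sum_congr rfl fun j _ => hblock j,
    ← ENNReal.ofReal_sum_of_nonneg fun j _ => mul_nonneg hmass (by positivity),
    ← Finset.mul_sum, geom_sum_eq (one_lt_rpow hb (by linarith)).ne']

theorem withDensity_ofReal_indicator_Icc_apply {μ : Measure ℝ} [NullSingletonClass μ] (f : ℝ → ℝ)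
    {a b : ℝ} {s : Set ℝ} (hs : MeasurableSet s) :
    μ.withDensity (fun t => ENNReal.ofReal ((Icc a b).indicator f t)) s =
      ∫⁻ t in s ∩ Ico a b, ENNReal.ofReal (f t) ∂μ := by
  rw [withDensity_apply _ hs, ← Function.comp_def ENNReal.ofReal,
    ← indicator_comp_of_zero ENNReal.ofReal_zero, setLIntegral_indicator measurableSet_Icc,
    inter_comm, setLIntegral_congr ((ae_eq_refl _).inter Ico_ae_eq_Icc).symm]
  rfl

theorem powerlaw_density_first_digit_gbl_general (α : ℝ) (hα₁ : α < 1) (D : ℕ)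
    {Ω : Type*} [MeasurableSpace Ω] (ℙ : Measure Ω)
    (T : Ω → ℝ) (hT : Measurable T)
    (hdens : Measure.map T ℙ =
      volume.withDensity (fun t =>
        ENNReal.ofReal
          (Set.indicator (Set.Icc (1 : ℝ) ((10 : ℝ) ^ (D + 1 : ℕ)))
            (fun s => ((1 - α) / ((10 : ℝ) ^ (((D : ℝ) + 1) * (1 - α)) - 1)) * s ^ (-α)) t))) :
    ∀ d : ℤ, d ∈ Finset.Icc (1 : ℤ) 9 →
      ℙ {ω | ⌊T ω / (10 : ℝ) ^ (⌊Real.logb 10 (T ω)⌋)⌋ = d} =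
        ENNReal.ofReal
          ((((d : ℝ) + 1) ^ (1 - α) - (d : ℝ) ^ (1 - α)) / ((10 : ℝ) ^ (1 - α) - 1)) := by
  intro d hd
  obtain ⟨hd₁, hd₉⟩ := Finset.mem_Icc.1 hd
  set c := (1 - α) / ((10 : ℝ) ^ (((D : ℝ) + 1) * (1 - α)) - 1)
  have htotal : (10 : ℝ) ^ (((D : ℝ) + 1) * (1 - α)) = ((10 : ℝ) ^ (1 - α)) ^ (D + 1) := by
    rw [← rpow_mul_natCast (by norm_num)]
    push_cast
    ring_nf
  have hq : 1 < (10 : ℝ) ^ (1 - α) := one_lt_rpow (by norm_num) (by linarith)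
  have hQ : 1 < (10 : ℝ) ^ (((D : ℝ) + 1) * (1 - α)) :=
    htotal ▸ one_lt_pow₀ hq (Nat.succ_ne_zero D)
  have hc : 0 ≤ c := div_nonneg (by linarith) (by linarith)
  have hdigit : MeasurableSet {t : ℝ | firstDigit 10 t = d} :=
    measurable_firstDigit 10 (measurableSet_singleton d)
  calc ℙ {ω | ⌊T ω / (10 : ℝ) ^ (⌊Real.logb 10 (T ω)⌋)⌋ = d}
      = Measure.map T ℙ {t | firstDigit 10 t = d} := (Measure.map_apply hT hdigit).symm
    _ = ENNReal.ofReal c * ∫⁻ t in {t | firstDigit 10 t = d} ∩ Ico 1 (10 ^ (D + 1)),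
          ENNReal.ofReal (t ^ (-α)) := by
      simp_rw [hdens, withDensity_ofReal_indicator_Icc_apply _ hdigit, ENNReal.ofReal_mul hc,
        lintegral_const_mul' _ _ ENNReal.ofReal_ne_top]
    _ = ENNReal.ofReal
          ((((d : ℝ) + 1) ^ (1 - α) - (d : ℝ) ^ (1 - α)) / ((10 : ℝ) ^ (1 - α) - 1)) := by
      rw [setLIntegral_firstDigit_rpow_neg (by norm_num) hα₁ hd₁ (by norm_cast; omega),
        ← ENNReal.ofReal_mul hc, ← htotal]
      have hne : (10 : ℝ) ^ (((D : ℝ) + 1) * (1 - α)) - 1 ≠ 0 := by linarith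
      have hα' : 1 - α ≠ 0 := by linarith
      congr 1
      simp only [c]
      generalize (10 : ℝ) ^ (((D : ℝ) + 1) * (1 - α)) = B at hne
      field_simp

/-- if `T` has density `((1-α)/(10^{(D+1)(1-α)} − 1))·t^{−α}` on
`[1, 10^{D+1}]` (and `0` elsewhere) with `0 ≤ α < 1`, then the first significant digit of
`T` follows the generalized Benford law with exponent `α`. -/
theorem powerlaw_density_first_digit_gbl (α : ℝ) (hα₀ : 0 ≤ α) (hα₁ : α < 1) (D : ℕ)
    {Ω : Type*} [MeasurableSpace Ω] (ℙ : Measure Ω) [IsProbabilityMeasure ℙ]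
    (T : Ω → ℝ) (hT : Measurable T)
    (hdens : Measure.map T ℙ =
      volume.withDensity (fun t =>
        ENNReal.ofReal
          (Set.indicator (Set.Icc (1 : ℝ) ((10 : ℝ) ^ (D + 1 : ℕ)))
            (fun s => ((1 - α) / ((10 : ℝ) ^ (((D : ℝ) + 1) * (1 - α)) - 1)) * s ^ (-α)) t))) :
    ∀ d : ℤ, d ∈ Finset.Icc (1 : ℤ) 9 →
      ℙ {ω | ⌊T ω / (10 : ℝ) ^ (⌊Real.logb 10 (T ω)⌋)⌋ = d} =
        ENNReal.ofReal
          ((((d : ℝ) + 1) ^ (1 - α) - (d : ℝ) ^ (1 - α)) / ((10 : ℝ) ^ (1 - α) - 1)) :=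
  powerlaw_density_first_digit_gbl_general α hα₁ D ℙ T hT hdens
end

section
/- Let 0 ≤ α < 1, D ∈ ℕ, and let T be a real random variable taking values in [1, 10^{D+1}) whose cumulative distribution function F_T is continuous with F_T(1) = 0. Define Z = ((T·10^{−⌊log₁₀ T⌋})^{1−α} − 1)/(10^{1−α} − 1). Then for every z ∈ [0,1], P(Z ≤ z) = ∑_{d=0}^{D} (F_T(v(z)·10^d) − F_T(10^d)), where v(z) = ((10^{1−α} − 1)·z + 1)^{1/(1−α)}. -/
/-!
The map `x ↦ (x ^ (1 - α) - 1) / (10 ^ (1 - α) - 1)` is increasing, so `Z ≤ z` says that the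
mantissa of `T` is at most `v(z) ∈ [1, 10]`. As `F_T` is continuous, almost surely `T` is not a
power of `10`; for such `T` in decade `d`, the mantissa is at most `v(z)` exactly when
`T ∈ (10^d, v(z)·10^d]`. These intervals are disjoint for distinct `d`, and the `d`-th one has
probability `F_T(v(z)·10^d) - F_T(10^d)`.
-/

open Real MeasureTheory Set Filter Function

open ProbabilityTheory (cdf measure_cdf cdf_eq_real)

theorem Real.floor_logb_eq_iff {b t : ℝ} (hb : 1 < b) (ht : 0 < t) {d : ℤ} :
    ⌊logb b t⌋ = d ↔ b ^ d ≤ t ∧ t < b ^ (d + 1) := by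
  rw [Int.floor_eq_iff, le_logb_iff_rpow_le hb ht, logb_lt_iff_lt_rpow hb ht,
    ← rpow_intCast, ← Int.cast_one, ← Int.cast_add, rpow_intCast, rpow_intCast]

noncomputable def mantissa (b t : ℝ) : ℝ := t * b ^ (-⌊logb b t⌋)

theorem mantissa_nonneg {b t : ℝ} (hb : 0 ≤ b) (ht : 0 ≤ t) : 0 ≤ mantissa b t :=
  mul_nonneg ht (zpow_nonneg hb _)

theorem mantissa_le_iff_le_mul_zpow {b t v : ℝ} {d : ℤ} (hb : 1 < b) (hd : ⌊logb b t⌋ = d) :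
    mantissa b t ≤ v ↔ t ≤ v * b ^ d := by
  rw [mantissa, hd, zpow_neg, ← div_eq_mul_inv, div_le_iff₀ (zpow_pos (one_pos.trans hb) d)]

theorem mantissa_le_iff_exists_pow {b t v : ℝ} {n : ℕ} (hb : 1 < b) (hv : v ≤ b)
    (ht : t ∈ Ico 1 (b ^ n)) (ht_pow : ∀ k : ℕ, t ≠ b ^ k) :
    mantissa b t ≤ v ↔ ∃ d < n, b ^ d < t ∧ t ≤ v * b ^ d := by
  have ht₀ : 0 < t := one_pos.trans_le ht.1
  constructor
  · intro h
    obtain ⟨d, hd⟩ : ∃ d : ℕ, ⌊logb b t⌋ = d :=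
      Int.eq_ofNat_of_zero_le (Int.floor_nonneg.2 (logb_nonneg hb ht.1))
    obtain ⟨hdt, -⟩ := (floor_logb_eq_iff hb ht₀).1 hd
    rw [zpow_natCast] at hdt
    exact ⟨d, (pow_lt_pow_iff_right₀ hb).1 (hdt.trans_lt ht.2),
      hdt.lt_of_ne (ht_pow d).symm, by rwa [mantissa_le_iff_le_mul_zpow hb hd, zpow_natCast] at h⟩
  · rintro ⟨d, -, hdt, htv⟩
    have htd : t < b ^ (d + 1) := by
      refine lt_of_le_of_ne (htv.trans ?_) (ht_pow (d + 1))
      rw [pow_succ']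
      exact mul_le_mul_of_nonneg_right hv (by positivity)
    have hd : ⌊logb b t⌋ = d := by
      rw [floor_logb_eq_iff hb ht₀]
      exact ⟨mod_cast hdt.le, mod_cast htd⟩
    rwa [mantissa_le_iff_le_mul_zpow hb hd, zpow_natCast]

theorem rpow_sub_one_div_le_iff {p c x w : ℝ} (hp : 0 < p) (hc : 0 < c) (hx : 0 ≤ x)
    (hw : 0 ≤ c * w + 1) : (x ^ p - 1) / c ≤ w ↔ x ≤ (c * w + 1) ^ (1 / p) := by
  rw [one_div, le_rpow_inv_iff_of_pos hx hw hp, div_le_iff₀ hc, sub_le_iff_le_add, mul_comm]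

theorem rpow_one_div_mem_Icc {b p z : ℝ} (hb : 1 < b) (hp : 0 < p) (hz : z ∈ Icc 0 1) :
    ((b ^ p - 1) * z + 1) ^ (1 / p) ∈ Icc 1 b := by
  have hc : 0 ≤ b ^ p - 1 := sub_nonneg.2 (one_le_rpow hb.le hp.le)
  have hcz : 1 ≤ (b ^ p - 1) * z + 1 := le_add_of_nonneg_left (mul_nonneg hc hz.1)
  refine ⟨one_le_rpow hcz (by positivity), ?_⟩
  rw [one_div, rpow_inv_le_iff_of_pos (by positivity) (by positivity) hp]
  linarith [mul_le_of_le_one_right hc hz.2]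

theorem pairwise_disjoint_Ioc_pow_mul {b v : ℝ} (hb : 1 ≤ b) (hv : v ≤ b) :
    Pairwise (Disjoint on fun d : ℕ => Ioc (b ^ d) (v * b ^ d)) := by
  refine fun i j hij => ((pow_right_mono₀ hb).pairwise_disjoint_on_Ioc_succ hij).mono ?_ ?_ <;>
  · refine Ioc_subset_Ioc_right ?_
    rw [Order.succ_eq_add_one, pow_succ']
    exact mul_le_mul_of_nonneg_right hv (by positivity)

section CDF

variable {Ω : Type*} [MeasurableSpace Ω] {μ : Measure Ω} [IsProbabilityMeasure μ]
  {T : Ω → ℝ}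

theorem cdf_map_apply (hT : Measurable T) (x : ℝ) :
    cdf (μ.map T) x = (μ {ω | T ω ≤ x}).toReal := by
  have := Measure.isProbabilityMeasure_map (μ := μ) hT.aemeasurable
  rw [cdf_eq_real, measureReal_def, Measure.map_apply hT measurableSet_Iic]
  rfl

theorem ae_ne_of_continuousAt_cdf (hT : Measurable T) {t : ℝ}
    (hF : ContinuousAt (fun x => (μ {ω | T ω ≤ x}).toReal) t) : ∀ᵐ ω ∂μ, T ω ≠ t := by
  have := Measure.isProbabilityMeasure_map (μ := μ) hT.aemeasurable
  have hcont : ContinuousAt (cdf (μ.map T)) t := by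
    simpa only [← funext (cdf_map_apply hT)] using hF
  have hatom := (cdf (μ.map T)).measure_singleton t
  rw [measure_cdf, Measure.map_apply hT (measurableSet_singleton t),
    hcont.continuousWithinAt.leftLim_eq, sub_self, ENNReal.ofReal_zero] at hatom
  simp only [ae_iff, ne_eq, not_not]
  exact hatom

theorem toReal_measure_preimage_Ioc (hT : Measurable T) {a b : ℝ} (hab : a ≤ b) :
    (μ (T ⁻¹' Ioc a b)).toReal = (μ {ω | T ω ≤ b}).toReal - (μ {ω | T ω ≤ a}).toReal := by
  have := Measure.isProbabilityMeasure_map (μ := μ) hT.aemeasurable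
  rw [← Measure.map_apply hT measurableSet_Ioc, ← measure_cdf (μ.map T),
    StieltjesFunction.measure_Ioc, ENNReal.toReal_ofReal, cdf_map_apply hT, cdf_map_apply hT]
  exact sub_nonneg.2 ((cdf (μ.map T)).mono hab)

end CDF

theorem cdf_of_mantissa_variable_general (α : ℝ) (hα₁ : α < 1) (D : ℕ)
    {Ω : Type*} [MeasurableSpace Ω] (ℙ : Measure Ω) [IsProbabilityMeasure ℙ]
    (T : Ω → ℝ) (hT : Measurable T)
    (hrange : ∀ ω, T ω ∈ Set.Ico (1 : ℝ) ((10 : ℝ) ^ (D + 1 : ℕ)))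
    (F : ℝ → ℝ) (hF : ∀ t, F t = (ℙ {ω | T ω ≤ t}).toReal)
    (hFcont : Continuous F) :
    ∀ z ∈ Set.Icc (0 : ℝ) 1,
      (ℙ {ω | ((T ω * (10 : ℝ) ^ (-⌊Real.logb 10 (T ω)⌋)) ^ (1 - α) - 1) /
            ((10 : ℝ) ^ (1 - α) - 1) ≤ z}).toReal =
        ∑ d ∈ Finset.range (D + 1),
          (F ((((10 : ℝ) ^ (1 - α) - 1) * z + 1) ^ ((1 : ℝ) / (1 - α)) * (10 : ℝ) ^ d) -
            F ((10 : ℝ) ^ d)) := by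
  obtain rfl : F = fun t => (ℙ {ω | T ω ≤ t}).toReal := funext hF
  rintro z hz
  have hp : 0 < 1 - α := sub_pos.2 hα₁
  obtain ⟨hv₁, hv₁₀⟩ := rpow_one_div_mem_Icc (b := 10) (by norm_num) hp hz
  set c := (10 : ℝ) ^ (1 - α) - 1
  have hc : 0 < c := sub_pos.2 (one_lt_rpow (by norm_num) hp)
  have hcz : 0 ≤ c * z + 1 := add_nonneg (mul_nonneg hc.le hz.1) zero_le_one
  set v := (c * z + 1) ^ ((1 : ℝ) / (1 - α)) with hv
  have hnot_pow : ∀ᵐ ω ∂ℙ, ∀ k : ℕ, T ω ≠ 10 ^ k :=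
    ae_all_iff.2 fun k => ae_ne_of_continuousAt_cdf hT hFcont.continuousAt
  have hevent : {ω | (mantissa 10 (T ω) ^ (1 - α) - 1) / c ≤ z}
      =ᵐ[ℙ] ⋃ d ∈ Finset.range (D + 1), T ⁻¹' Ioc (10 ^ d) (v * 10 ^ d) := by
    refine eventuallyEq_set.2 (hnot_pow.mono fun ω hω => ?_)
    have hm := mantissa_nonneg (b := 10) (by norm_num) (zero_le_one.trans (hrange ω).1)
    rw [mem_ofPred_eq, rpow_sub_one_div_le_iff hp hc hm hcz, ← hv,
      mantissa_le_iff_exists_pow (by norm_num) hv₁₀ (hrange ω) hω]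
    simp only [mem_iUnion₂, Finset.mem_range, mem_preimage, mem_Ioc, exists_prop]
  have hdisj : (Finset.range (D + 1) : Set ℕ).PairwiseDisjoint
      fun d => T ⁻¹' Ioc (10 ^ d) (v * 10 ^ d) := fun i _ j _ hij =>
    (pairwise_disjoint_Ioc_pow_mul (by norm_num) hv₁₀ hij).preimage T
  change (ℙ {ω | (mantissa 10 (T ω) ^ (1 - α) - 1) / c ≤ z}).toReal = _
  rw [measure_congr hevent, measure_biUnion_finset hdisj fun d _ => hT measurableSet_Ioc,
    ENNReal.toReal_sum fun d _ => measure_ne_top _ _]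
  exact Finset.sum_congr rfl fun d _ =>
    toReal_measure_preimage_Ioc hT (le_mul_of_one_le_left (by positivity) hv₁)

/-- for `T` taking values in `[1, 10^{D+1})` with continuous cumulative
distribution function `F_T` satisfying `F_T(1) = 0`, the candidate uniform variable
`Z = ((T·10^{−⌊log₁₀ T⌋})^{1−α} − 1)/(10^{1−α} − 1)` satisfies
`P(Z ≤ z) = ∑_{d=0}^{D} (F_T(v(z)·10^d) − F_T(10^d))` for all `z ∈ [0,1]`. -/
theorem cdf_of_mantissa_variable (α : ℝ) (hα₀ : 0 ≤ α) (hα₁ : α < 1) (D : ℕ)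
    {Ω : Type*} [MeasurableSpace Ω] (ℙ : Measure Ω) [IsProbabilityMeasure ℙ]
    (T : Ω → ℝ) (hT : Measurable T)
    (hrange : ∀ ω, T ω ∈ Set.Ico (1 : ℝ) ((10 : ℝ) ^ (D + 1 : ℕ)))
    (F : ℝ → ℝ) (hF : ∀ t, F t = (ℙ {ω | T ω ≤ t}).toReal)
    (hFcont : Continuous F) (hF1 : F 1 = 0) :
    ∀ z ∈ Set.Icc (0 : ℝ) 1,
      (ℙ {ω | ((T ω * (10 : ℝ) ^ (-⌊Real.logb 10 (T ω)⌋)) ^ (1 - α) - 1) /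
            ((10 : ℝ) ^ (1 - α) - 1) ≤ z}).toReal =
        ∑ d ∈ Finset.range (D + 1),
          (F ((((10 : ℝ) ^ (1 - α) - 1) * z + 1) ^ ((1 : ℝ) / (1 - α)) * (10 : ℝ) ^ d) -
            F ((10 : ℝ) ^ d)) :=
  cdf_of_mantissa_variable_general α hα₁ D ℙ T hT hrange F hF hFcont
end

section
/- Fix a real number a and define, for real N large enough that log N > a + 1, the counting function L(N) = e·α(N)·∫_2^N x^{−α(N)} dx with α(N) = 1/(log N − a). Then L satisfies the prime number theorem normalization: L(N)·log N / N → 1 as N → ∞. -/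
/-!
With `α = α(N)`, the integral is elementary:
`e·α·∫_c^N x^{-α} dx · log N / N = α log N / (1 - α) · (e·N^{-α} - e·c^{1-α} / N)`.
Since `α → 0` and `α·log N → 1`, the first factor tends to `1`, `e·N^{-α} = exp (1 - α log N)`
tends to `1`, and `c^{1-α} / N → 0`.
-/

open Real Filter Topology

theorem exp_one_mul_integral_rpow_neg_mul_log_div_eq (c : ℝ) {α N : ℝ} (hα : α < 1)
    (hN : 0 < N) :
    exp 1 * α * (∫ x in c..N, x ^ (-α)) * log N / N =
      α * log N / (1 - α) * (exp 1 * N ^ (-α) - exp 1 * c ^ (1 - α) / N) := by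
  have h1α : 1 - α ≠ 0 := by linarith
  rw [integral_rpow (Or.inl (by linarith)), neg_add_eq_sub,
    show N ^ (1 - α) = N ^ (-α) * N by rw [sub_eq_neg_add, rpow_add_one hN.ne']]
  field_simp

section

variable {α : ℝ → ℝ}

theorem tendsto_exp_one_mul_rpow_neg (hlog : Tendsto (fun N => α N * log N) atTop (𝓝 1)) :
    Tendsto (fun N => exp 1 * N ^ (-α N)) atTop (𝓝 1) := by
  have hexp : Tendsto (fun N => exp (1 - α N * log N)) atTop (𝓝 (exp (1 - 1))) :=
    (continuous_exp.tendsto _).comp (tendsto_const_nhds.sub hlog)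
  rw [sub_self, exp_zero] at hexp
  refine hexp.congr' ?_
  filter_upwards [eventually_gt_atTop 0] with N hN
  rw [rpow_def_of_pos hN, ← exp_add]
  ring_nf

theorem tendsto_const_rpow_one_sub_div_atTop (c : ℝ) (hα : Tendsto α atTop (𝓝 0)) :
    Tendsto (fun N => c ^ (1 - α N) / N) atTop (𝓝 0) := by
  have hpow : Tendsto (fun N => c ^ (1 - α N)) atTop (𝓝 (c ^ (1 - (0 : ℝ)))) :=
    (continuousAt_const_rpow' (by norm_num)).tendsto.comp (tendsto_const_nhds.sub hα)
  exact hpow.div_atTop tendsto_id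

theorem tendsto_exp_one_mul_integral_rpow_neg_mul_log_div (c : ℝ)
    (hα : Tendsto α atTop (𝓝 0)) (hlog : Tendsto (fun N => α N * log N) atTop (𝓝 1)) :
    Tendsto (fun N => exp 1 * α N * (∫ x in c..N, x ^ (-α N)) * log N / N) atTop (𝓝 1) := by
  have hratio : Tendsto (fun N => α N * log N / (1 - α N)) atTop (𝓝 1) := by
    have h := hlog.div (tendsto_const_nhds.sub hα) (by norm_num : (1 : ℝ) - 0 ≠ 0)
    rwa [sub_zero, div_one] at h
  have hdiff : Tendsto (fun N => exp 1 * N ^ (-α N) - exp 1 * c ^ (1 - α N) / N) atTop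
      (𝓝 1) := by
    simpa only [mul_zero, sub_zero, mul_div_assoc] using (tendsto_exp_one_mul_rpow_neg hlog).sub
      ((tendsto_const_rpow_one_sub_div_atTop c hα).const_mul (exp 1))
  have hprod := hratio.mul hdiff
  rw [one_mul] at hprod
  refine hprod.congr' ?_
  filter_upwards [hα.eventually (gt_mem_nhds one_pos), eventually_gt_atTop 0] with N hα1 hN
  exact (exp_one_mul_integral_rpow_neg_mul_log_div_eq c hα1 hN).symm

end

theorem tendsto_log_sub_atTop (a : ℝ) : Tendsto (fun N => log N - a) atTop atTop := by
  simpa only [sub_eq_add_neg] using tendsto_atTop_add_const_right atTop (-a) tendsto_log_atTop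

theorem tendsto_one_div_log_sub (a : ℝ) :
    Tendsto (fun N => 1 / (log N - a)) atTop (𝓝 0) := by
  simp only [one_div]
  exact (tendsto_log_sub_atTop a).inv_tendsto_atTop

theorem tendsto_one_div_log_sub_mul_log (a : ℝ) :
    Tendsto (fun N => 1 / (log N - a) * log N) atTop (𝓝 1) := by
  have hlim := ((tendsto_one_div_log_sub a).const_mul a).const_add 1
  rw [mul_zero, add_zero] at hlim
  refine hlim.congr' ?_
  filter_upwards [(tendsto_log_sub_atTop a).eventually_gt_atTop 0] with N hN
  field_simp
  ring

/-- the counting function `L(N) = e·α(N)·∫_2^N x^{−α(N)} dx`, with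
`α(N) = 1/(log N − a)`, satisfies the prime number theorem normalization
`L(N)·log N / N → 1` as `N → ∞`. -/
theorem L_satisfies_PNT (a : ℝ) :
    Tendsto (fun N : ℝ =>
        (Real.exp 1 * (1 / (Real.log N - a)) *
            ∫ x in (2 : ℝ)..N, x ^ (-(1 / (Real.log N - a)))) * Real.log N / N)
      atTop (𝓝 1) := by
  exact tendsto_exp_one_mul_integral_rpow_neg_mul_log_div 2 (tendsto_one_div_log_sub a)
    (tendsto_one_div_log_sub_mul_log a)
end

section
/- Fix a real number a and define L(N) = e·α(N)·∫_2^N x^{−α(N)} dx with α(N) = 1/(log N − a). Then L admits the asymptotic expansion L(N) = N/log N + N/(log N)² + (1 + a − a²/2)·N/(log N)³ + O(N/(log N)⁴) as N → ∞; i.e., the difference L(N) − N/log N − N/(log N)² − (1 + a − a²/2)·N/(log N)³ is O(N/(log N)⁴). -/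
open Real Filter Topology Asymptotics

/-! Put `y = log N` and `α = 1 / (y - a)`. The integral is elementary and `e · N^(1-α) = N · e^(-a/(y-a))`,
so `L(N) = N · e^(-a/(y-a)) / (y - a - 1)` minus a term coming from the lower limit `2`, which stays
bounded since `α → 0`. Expanding `e^t` to second order at `t = -a/(y-a) = O(1/y)` leaves a rational
function of `y` whose expansion in powers of `1/y` has the coefficients `1, 1, 1 + a - a²/2`. -/

lemma exp_sub_quadratic_isBigO :
    (fun t : ℝ => exp t - (1 + t + t ^ 2 / 2)) =O[𝓝 0] (fun t => t ^ 3) := by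
  refine isBigO_iff.2 ⟨1, ?_⟩
  filter_upwards [Metric.closedBall_mem_nhds (0 : ℝ) zero_lt_one] with t ht
  have ht' : |t| ≤ 1 := by simpa using ht
  have h := Real.exp_bound ht' (n := 3) (by norm_num)
  have hsum : ∑ m ∈ Finset.range 3, t ^ m / m.factorial = 1 + t + t ^ 2 / 2 := by
    simp [Finset.sum_range_succ]
  rw [hsum] at h
  rw [norm_eq_abs, norm_eq_abs, one_mul, abs_pow]
  calc _ ≤ |t| ^ 3 * ((Nat.succ 3 : ℝ) / (Nat.factorial 3 * 3)) := h
    _ ≤ |t| ^ 3 := by norm_num [Nat.factorial]; nlinarith [pow_nonneg (abs_nonneg t) 3]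

lemma inv_sub_const_isBigO (b : ℝ) : (fun y : ℝ => (y - b)⁻¹) =O[atTop] (fun y => y⁻¹) := by
  have hsub : (fun y : ℝ => y - b) ~[atTop] id :=
    (IsEquivalent.refl.add_isLittleO (isLittleO_const_id_atTop (-b))).congr_left
      (.of_eq (by ext; simp [sub_eq_add_neg]))
  exact hsub.inv.isBigO

lemma exp_one_mul_rpow_one_sub_inv (a : ℝ) {N : ℝ} (hN : 0 < N) (h : log N - a ≠ 0) :
    exp 1 * N ^ (1 - 1 / (log N - a)) = N * exp (-(a / (log N - a))) := by
  calc exp 1 * N ^ (1 - 1 / (log N - a))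
      = exp (log N) * exp (-(a / (log N - a))) := by
        rw [rpow_def_of_pos hN, ← exp_add, ← exp_add]
        congr 1
        field_simp
        ring
    _ = N * exp (-(a / (log N - a))) := by rw [exp_log hN]

lemma exp_one_mul_integral_rpow_eq (a : ℝ) {N : ℝ} (hN : 0 < N) (h : 1 < log N - a) :
    exp 1 * (1 / (log N - a)) * ∫ x in (2 : ℝ)..N, x ^ (-(1 / (log N - a))) =
      N * (exp (-(a / (log N - a))) / (log N - a - 1)) -
        exp 1 * (1 / (log N - a)) * 2 ^ (1 - 1 / (log N - a)) / (1 - 1 / (log N - a)) := by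
  have hα : 1 / (log N - a) < 1 := (div_lt_one (by linarith)).2 h
  have h1 : log N - a ≠ 0 := by linarith
  have h2 : log N - a - 1 ≠ 0 := by linarith
  rw [integral_rpow (Or.inl (by linarith)), neg_add_eq_sub]
  calc _ = 1 / (log N - a) / (1 - 1 / (log N - a)) * (exp 1 * N ^ (1 - 1 / (log N - a))) -
        exp 1 * (1 / (log N - a)) * 2 ^ (1 - 1 / (log N - a)) / (1 - 1 / (log N - a)) := by ring
    _ = _ := by
      rw [exp_one_mul_rpow_one_sub_inv a hN h1]
      field_simp

lemma exp_neg_div_sub_div_expansion (a : ℝ) :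
    (fun y : ℝ => exp (-(a / (y - a))) / (y - a - 1) - y⁻¹ - y⁻¹ ^ 2 -
      (1 + a - a ^ 2 / 2) * y⁻¹ ^ 3) =O[atTop] (fun y => y⁻¹ ^ 4) := by
  set t : ℝ → ℝ := fun y => -(a / (y - a)) with ht_def
  have ht : t =O[atTop] (fun y => y⁻¹) :=
    ((inv_sub_const_isBigO a).const_mul_left (-a)).congr_left fun y => by
      simp [ht_def, div_eq_mul_inv]
  have hden : (fun y : ℝ => (y - a - 1)⁻¹) =O[atTop] (fun y => y⁻¹) := by
    simpa only [sub_sub] using inv_sub_const_isBigO (a + 1)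
  have hexp : (fun y => (exp (t y) - (1 + t y + t y ^ 2 / 2)) * (y - a - 1)⁻¹)
      =O[atTop] (fun y : ℝ => y⁻¹ ^ 4) := by
    have hR := exp_sub_quadratic_isBigO.comp_tendsto (ht.trans_tendsto tendsto_inv_atTop_zero)
    exact ((hR.trans (ht.pow 3)).mul hden).congr_right fun y => (pow_succ _ 3).symm
  -- The quadratic Taylor part minus `y⁻¹ + y⁻² + (1 + a - a²/2) y⁻³` equals this polynomial
  -- in `y⁻¹` times `y⁻¹ (y - a)⁻² (y - a - 1)⁻¹`: clearing denominators, the `y⁵, y⁴, y³` terms cancel.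
  have hpoly : (fun y : ℝ => (1 + 2 * a + a ^ 2 / 2 - a ^ 3 / 2) +
      (3 * a ^ 4 / 2 - a ^ 3 - 4 * a ^ 2 - 2 * a) * y⁻¹ +
      (a ^ 2 + 2 * a ^ 3 + a ^ 4 / 2 - a ^ 5 / 2) * y⁻¹ ^ 2) =O[atTop] (fun _ => (1 : ℝ)) := by
    refine Tendsto.isBigO_one ℝ (c := 1 + 2 * a + a ^ 2 / 2 - a ^ 3 / 2) ?_
    have : Tendsto (fun y : ℝ => y⁻¹) atTop (𝓝 0) := tendsto_inv_atTop_zero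
    simpa using (tendsto_const_nhds.add (this.const_mul _)).add ((this.pow 2).const_mul _)
  have hrat := ((hpoly.mul (isBigO_refl (fun y : ℝ => y⁻¹) atTop)).mul
    ((inv_sub_const_isBigO a).pow 2)).mul hden
  refine (hexp.add (hrat.congr_right fun y => by ring)).congr' ?_ EventuallyEq.rfl
  filter_upwards [eventually_gt_atTop (a + 1), eventually_gt_atTop 0] with y hy hy0
  have h1 : y - a ≠ 0 := by linarith
  have h2 : y - a - 1 ≠ 0 := by linarith
  simp only [ht_def]
  field_simp
  ring

lemma one_isBigO_div_log_pow (n : ℕ) :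
    (fun _ : ℝ => (1 : ℝ)) =O[atTop] (fun N => N / log N ^ n) := by
  refine (isLittleO_one_left_iff ℝ).2 ?_ |>.isBigO
  refine tendsto_norm_atTop_atTop.comp ?_
  refine ((tendsto_exp_div_pow_atTop n).comp tendsto_log_atTop).congr' ?_
  filter_upwards [eventually_gt_atTop 0] with N hN
  simp [exp_log hN]

/-- the counting function `L(N) = e·α(N)·∫_2^N x^{−α(N)} dx`, with
`α(N) = 1/(log N − a)`, admits the asymptotic expansion
`L(N) = N/log N + N/log²N + (1 + a − a²/2)·N/log³N + O(N/log⁴N)` as `N → ∞`. -/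
theorem L_asymptotic_expansion (a : ℝ) :
    (fun N : ℝ =>
        (Real.exp 1 * (1 / (Real.log N - a)) *
            ∫ x in (2 : ℝ)..N, x ^ (-(1 / (Real.log N - a)))) -
          N / Real.log N - N / (Real.log N) ^ 2 -
          (1 + a - a ^ 2 / 2) * N / (Real.log N) ^ 3) =O[atTop]
      (fun N : ℝ => N / (Real.log N) ^ 4) := by
  have hlog : Tendsto (fun N : ℝ => log N - a) atTop atTop :=
    tendsto_atTop_add_const_right _ (-a) tendsto_log_atTop
  have hα : Tendsto (fun N : ℝ => 1 / (log N - a)) atTop (𝓝 0) :=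
    (tendsto_inv_atTop_zero.comp hlog).congr fun _ => (one_div _).symm
  have hcont : ContinuousAt (fun α : ℝ => exp 1 * α * 2 ^ (1 - α) / (1 - α)) 0 := by
    fun_prop (disch := norm_num)
  have hboundary := ((hcont.tendsto.comp hα).isBigO_one ℝ).trans (one_isBigO_div_log_pow 4)
  have hmain := ((isBigO_refl (fun N : ℝ => N) atTop).mul
    ((exp_neg_div_sub_div_expansion a).comp_tendsto tendsto_log_atTop)).congr_right
      (g₂ := fun N => N / log N ^ 4) fun N => by simp [div_eq_mul_inv]
  refine (hmain.sub hboundary).congr' ?_ EventuallyEq.rfl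
  filter_upwards [eventually_gt_atTop 0, hlog.eventually_gt_atTop 1] with N hN hlogN
  rw [exp_one_mul_integral_rpow_eq a hN hlogN]
  simp only [Function.comp_apply]
  ring
end

section
/- Fix a real number a, let α(N) = 1/(log N − a), L(N) = e·α(N)·∫_2^N x^{−α(N)} dx and Li(N) = ∫_2^N dt/log t. Then the discrepancy between Li and L satisfies (Li(N) − L(N))·(log N)³/N → 1 − a + a²/2 as N → ∞; in particular, for a = 1 this limit equals 1/2. -/
open Real Filter Topology

/-!
Write `t = log N` and `α = 1/(t - a)`. Since `x/log x + x/log² x + 2x/log³ x` has derivative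
`1/log x - 6/log⁴ x`, and `∫_2^N dt/log⁴ t = O(√N + N/t⁴)` (split the integral at `√N`),
`Li(N)·t³/N = t² + t + 2 + o(1)`. The integral in `L` is elementary, and since
`e·N^{-α} = e^{-a/(t-a)}`, `L(N)·t³/N = e^{-a/(t-a)}·t³/(t-a-1) + o(1)`. Replacing `e^{-a/(t-a)}`
by its Taylor polynomial of degree two costs `O(t⁻³)·t² = o(1)`, and what is left is a rational
function of `t` that tends to `1 - a + a²/2`.
-/

noncomputable def offsetLogIntegral (N : ℝ) : ℝ := ∫ t in (2 : ℝ)..N, 1 / log t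

noncomputable def liMainTerm (x : ℝ) : ℝ := x / log x + x / log x ^ 2 + 2 * x / log x ^ 3

lemma hasDerivAt_liMainTerm {x : ℝ} (hx : 1 < x) :
    HasDerivAt liMainTerm (1 / log x - 6 / log x ^ 4) x := by
  have hx0 : x ≠ 0 := (zero_lt_one.trans hx).ne'
  have hlog : log x ≠ 0 := (log_pos hx).ne'
  have hl := hasDerivAt_log hx0
  have h1 := (hasDerivAt_id x).div hl hlog
  have h2 := (hasDerivAt_id x).div (hl.pow 2) (pow_ne_zero 2 hlog)
  have h3 := ((hasDerivAt_id x).const_mul 2).div (hl.pow 3) (pow_ne_zero 3 hlog)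
  refine ((h1.add h2).add h3).congr_deriv ?_
  simp only [id, Pi.pow_apply]
  field_simp
  ring

lemma intervalIntegrable_div_log_pow (c : ℝ) (k : ℕ) {u v : ℝ} (hu : 1 < u) (huv : u ≤ v) :
    IntervalIntegrable (fun t => c / log t ^ k) MeasureTheory.volume u v := by
  have hs : Set.uIcc u v ⊆ Set.Ioi 1 := fun _ hx => hu.trans_le (Set.uIcc_of_le huv ▸ hx).1
  refine ContinuousOn.intervalIntegrable (continuousOn_const.div
    ((continuousOn_log.mono fun _ hx => (zero_lt_one.trans (hs hx)).ne').pow k) ?_)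
  exact fun _ hx => pow_ne_zero k (log_pos (hs hx)).ne'

lemma integral_one_div_log_eq {b N : ℝ} (hb : 1 < b) (hbN : b ≤ N) :
    ∫ t in b..N, 1 / log t = liMainTerm N - liMainTerm b + ∫ t in b..N, 6 / log t ^ 4 := by
  have hi1 : IntervalIntegrable (fun t => 1 / log t) MeasureTheory.volume b N := by
    simpa using intervalIntegrable_div_log_pow 1 1 hb hbN
  have hi4 := intervalIntegrable_div_log_pow 6 4 hb hbN
  have hftc := intervalIntegral.integral_eq_sub_of_hasDerivAt
    (fun x hx => hasDerivAt_liMainTerm (hb.trans_le (Set.uIcc_of_le hbN ▸ hx).1)) (hi1.sub hi4)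
  rw [intervalIntegral.integral_sub hi1 hi4] at hftc
  linarith

lemma integral_one_div_log_pow_le (k : ℕ) {N : ℝ} (hN : 4 ≤ N) :
    ∫ t in (2 : ℝ)..N, 1 / log t ^ k ≤ √N / log 2 ^ k + 2 ^ k * N / log N ^ k := by
  have h2 : (2 : ℝ) ≤ √N := (le_sqrt zero_le_two (by linarith)).2 (by linarith)
  have hsN : √N ≤ N := sqrt_le_self_iff.2 (Or.inr (by linarith))
  have hi₁ := intervalIntegrable_div_log_pow 1 k one_lt_two h2
  have hi₂ := intervalIntegrable_div_log_pow 1 k (one_lt_two.trans_le h2) hsN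
  have hsmall : ∫ t in (2 : ℝ)..√N, 1 / log t ^ k ≤ (√N - 2) * (1 / log 2 ^ k) := by
    refine (intervalIntegral.integral_mono_on h2 hi₁ intervalIntegrable_const
      fun x hx => ?_).trans_eq (by rw [intervalIntegral.integral_const, smul_eq_mul])
    have := log_pos one_lt_two
    gcongr
    exact hx.1
  have hlarge : ∫ t in √N..N, 1 / log t ^ k ≤ (N - √N) * (2 ^ k / log N ^ k) := by
    refine (intervalIntegral.integral_mono_on hsN hi₂ intervalIntegrable_const
      fun x hx => ?_).trans_eq (by rw [intervalIntegral.integral_const, smul_eq_mul])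
    have := log_pos (by linarith : (1 : ℝ) < N)
    have hx : log N / 2 ≤ log x := by
      rw [← log_sqrt (by linarith)]
      exact log_le_log (by linarith) hx.1
    calc 1 / log x ^ k ≤ 1 / (log N / 2) ^ k := by gcongr
      _ = 2 ^ k / log N ^ k := by rw [div_pow]; field_simp
  rw [← intervalIntegral.integral_add_adjacent_intervals hi₁ hi₂]
  calc _ ≤ (√N - 2) * (1 / log 2 ^ k) + (N - √N) * (2 ^ k / log N ^ k) :=
        add_le_add hsmall hlarge
    _ ≤ √N * (1 / log 2 ^ k) + N * (2 ^ k / log N ^ k) := by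
        have := log_pos one_lt_two
        have := log_pos (by linarith : (1 : ℝ) < N)
        gcongr <;> linarith [sqrt_nonneg N]
    _ = _ := by ring

lemma tendsto_mul_log_pow_div (c : ℝ) (k : ℕ) :
    Tendsto (fun N => c * log N ^ k / N) atTop (𝓝 0) := by
  simpa [mul_div_assoc] using
    (isLittleO_pow_log_id_atTop (n := k)).tendsto_div_nhds_zero.const_mul c

lemma tendsto_log_pow_div_sqrt (k : ℕ) : Tendsto (fun N => log N ^ k / √N) atTop (𝓝 0) := by
  simpa [sqrt_eq_rpow] using
    (isLittleO_log_rpow_rpow_atTop (k : ℝ) one_half_pos).tendsto_div_nhds_zero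

lemma tendsto_integral_one_div_log_pow_mul_div (k : ℕ) :
    Tendsto (fun N => (∫ t in (2 : ℝ)..N, 1 / log t ^ (k + 1)) * log N ^ k / N) atTop (𝓝 0) := by
  have hbound : Tendsto (fun N => log N ^ k / √N / log 2 ^ (k + 1) + 2 ^ (k + 1) / log N)
      atTop (𝓝 0) := by
    simpa using ((tendsto_log_pow_div_sqrt k).div_const _).add
      (tendsto_const_nhds.div_atTop tendsto_log_atTop)
  refine tendsto_of_tendsto_of_tendsto_of_le_of_le' tendsto_const_nhds hbound ?_ ?_
  · filter_upwards [eventually_ge_atTop 2] with N hN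
    have : 0 ≤ ∫ t in (2 : ℝ)..N, 1 / log t ^ (k + 1) :=
      intervalIntegral.integral_nonneg hN fun x hx => by
        have := log_pos (by linarith [hx.1] : (1 : ℝ) < x)
        positivity
    have := log_nonneg (by linarith : (1 : ℝ) ≤ N)
    positivity
  · filter_upwards [eventually_ge_atTop 4] with N hN
    have hN0 : 0 < N := by linarith
    have := log_pos (by linarith : (1 : ℝ) < N)
    have := sqrt_pos.2 hN0
    calc _ ≤ (√N / log 2 ^ (k + 1) + 2 ^ (k + 1) * N / log N ^ (k + 1)) * log N ^ k / N := by
          gcongr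
          exact integral_one_div_log_pow_le (k + 1) hN
      _ = _ := by
          field_simp
          linear_combination log N ^ (k + 1) * log N ^ k * log N * mul_self_sqrt hN0.le

lemma tendsto_offsetLogIntegral_mul_sub :
    Tendsto (fun N => offsetLogIntegral N * log N ^ 3 / N - (log N ^ 2 + log N + 2))
      atTop (𝓝 0) := by
  have h := (tendsto_mul_log_pow_div (-liMainTerm 2) 3).add
    ((tendsto_integral_one_div_log_pow_mul_div 3).const_mul 6)
  rw [mul_zero, add_zero] at h
  refine h.congr' ?_
  filter_upwards [eventually_ge_atTop 2] with N hN
  have hN0 : N ≠ 0 := by positivity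
  have hlogN : log N ≠ 0 := (log_pos (by linarith)).ne'
  have h6 : ∫ t in (2 : ℝ)..N, 6 / log t ^ 4 = 6 * ∫ t in (2 : ℝ)..N, 1 / log t ^ (3 + 1) := by
    rw [← intervalIntegral.integral_const_mul]
    simp only [mul_one_div]
  rw [offsetLogIntegral, integral_one_div_log_eq one_lt_two hN, h6]
  unfold liMainTerm
  field_simp
  ring

noncomputable def benfordExponent (a N : ℝ) : ℝ := 1 / (log N - a)

noncomputable def benfordCount (a N : ℝ) : ℝ :=
  exp 1 * benfordExponent a N * ∫ x in (2 : ℝ)..N, x ^ (-benfordExponent a N)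

lemma tendsto_benfordExponent (a : ℝ) : Tendsto (benfordExponent a) atTop (𝓝 0) :=
  tendsto_const_nhds.div_atTop (tendsto_atTop_add_const_right _ (-a) tendsto_log_atTop)

lemma exp_one_mul_benfordExponent_mul_rpow_div {a N : ℝ} (hN : 0 < N) (h₀ : log N - a ≠ 0)
    (h₁ : log N - a - 1 ≠ 0) :
    exp 1 * benfordExponent a N * N ^ (-benfordExponent a N + 1) / (-benfordExponent a N + 1) / N
      = exp (-a / (log N - a)) / (log N - a - 1) := by
  have hrpow : N ^ (-benfordExponent a N + 1) / N = exp (-(log N / (log N - a))) := by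
    rw [rpow_add hN, rpow_one, mul_div_cancel_right₀ _ hN.ne', rpow_def_of_pos hN,
      benfordExponent]
    ring_nf
  have hexp : 1 + -(log N / (log N - a)) = -a / (log N - a) := by
    field_simp
    ring
  have hfrac : benfordExponent a N / (-benfordExponent a N + 1) = 1 / (log N - a - 1) := by
    rw [benfordExponent, show -(1 / (log N - a)) + 1 = (log N - a - 1) / (log N - a) by
      field_simp; ring]
    field_simp
  calc _ = exp 1 * exp (-(log N / (log N - a)))
        * (benfordExponent a N / (-benfordExponent a N + 1)) := by
        rw [← hrpow]
        ring
    _ = _ := by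
        rw [← exp_add, hexp, hfrac]
        ring

lemma tendsto_benfordCount_mul_sub (a : ℝ) :
    Tendsto (fun N => benfordCount a N * log N ^ 3 / N
      - exp (-a / (log N - a)) * log N ^ 3 / (log N - a - 1)) atTop (𝓝 0) := by
  have hg : ContinuousAt (fun s => exp 1 * s * 2 ^ (-s + 1) / (-s + 1)) 0 :=
    ContinuousAt.div (by fun_prop (disch := norm_num)) (by fun_prop) (by norm_num)
  have hboundary : Tendsto (fun N => -(exp 1 * benfordExponent a N
      * 2 ^ (-benfordExponent a N + 1) / (-benfordExponent a N + 1) * (1 * log N ^ 3 / N)))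
      atTop (𝓝 0) := by
    simpa using ((hg.tendsto.comp (tendsto_benfordExponent a)).mul
      (tendsto_mul_log_pow_div 1 3)).neg
  refine hboundary.congr' ?_
  filter_upwards [eventually_gt_atTop 0, tendsto_log_atTop.eventually_gt_atTop (a + 1)]
    with N hN hlog
  have hα : -1 < -benfordExponent a N := by
    rw [benfordExponent, neg_lt_neg_iff, div_lt_one (by linarith)]
    linarith
  rw [benfordCount, integral_rpow (Or.inl hα)]
  linear_combination (-log N ^ 3) *
    exp_one_mul_benfordExponent_mul_rpow_div (a := a) hN (by linarith) (by linarith)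

lemma abs_exp_sub_quadratic_le {x : ℝ} (hx : |x| ≤ 1) :
    |exp x - (1 + x + x ^ 2 / 2)| ≤ 2 / 9 * |x| ^ 3 := by
  have h := exp_bound hx (n := 3) (by norm_num)
  norm_num [Finset.sum_range_succ, Nat.factorial] at h
  linarith

lemma tendsto_exp_sub_quadratic_mul (a : ℝ) :
    Tendsto (fun t => (exp (-a / (t - a)) - (1 + -a / (t - a) + (-a / (t - a)) ^ 2 / 2))
      * t ^ 3 / (t - a - 1)) atTop (𝓝 0) := by
  refine squeeze_zero_norm' ?_ (tendsto_const_nhds.div_atTop tendsto_id :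
    Tendsto (fun t : ℝ => 32 / 9 * |a| ^ 3 / t) atTop (𝓝 0))
  filter_upwards [eventually_ge_atTop (2 * |a| + 2)] with t htlarge
  have ha := abs_nonneg a
  have hta : t / 2 ≤ t - a - 1 := by linarith [le_abs_self a]
  have ht : 0 < t := by linarith
  have hx : |-a / (t - a)| ≤ 2 * |a| / t := by
    rw [abs_div, abs_neg, abs_of_pos (by linarith : 0 < t - a), div_le_div_iff₀ (by linarith) ht]
    nlinarith
  have hx1 : |-a / (t - a)| ≤ 1 := hx.trans ((div_le_one ht).2 (by linarith))
  rw [norm_div, norm_mul, norm_pow, Real.norm_eq_abs, Real.norm_eq_abs, Real.norm_eq_abs,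
    abs_of_pos ht, abs_of_pos (by linarith : 0 < t - a - 1)]
  calc _ ≤ 2 / 9 * (2 * |a| / t) ^ 3 * t ^ 3 / (t / 2) := by
        gcongr
        exact (abs_exp_sub_quadratic_le hx1).trans (by gcongr)
    _ = 32 / 9 * |a| ^ 3 / t := by
        field_simp
        ring

lemma tendsto_sq_add_add_two_sub_quadratic_mul (a : ℝ) :
    Tendsto (fun t => t ^ 2 + t + 2 - (1 + -a / (t - a) + (-a / (t - a)) ^ 2 / 2)
      * t ^ 3 / (t - a - 1)) atTop (𝓝 (1 - a + a ^ 2 / 2)) := by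
  -- Over the common denominator `(t - a)² (t - a - 1)` the numerator is a cubic in `t`;
  -- dividing both by `t³` gives a rational function of `s = 1/t`.
  have hcont : ContinuousAt (fun s : ℝ => ((1 - a + a ^ 2 / 2)
      + (-a ^ 3 + 2 * a ^ 2 - 4 * a - 2) * s + (-a ^ 3 + 5 * a ^ 2 + 4 * a) * s ^ 2
      + (-2 * a ^ 3 - 2 * a ^ 2) * s ^ 3) / ((1 - a * s) ^ 2 * (1 - (a + 1) * s))) 0 :=
    ContinuousAt.div (by fun_prop) (by fun_prop) (by norm_num)
  have hlim := hcont.tendsto.comp tendsto_inv_atTop_zero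
  norm_num at hlim
  refine hlim.congr' ?_
  filter_upwards [eventually_gt_atTop (|a| + 1)] with t ht
  have ht0 : t ≠ 0 := by linarith [abs_nonneg a]
  have h₀ : t - a ≠ 0 := by linarith [le_abs_self a]
  have h₁ : t - a - 1 ≠ 0 := by linarith [le_abs_self a]
  have e₀ : 1 - a * t⁻¹ = (t - a) / t := by field_simp
  have e₁ : 1 - (a + 1) * t⁻¹ = (t - a - 1) / t := by field_simp; ring
  simp only [Function.comp_apply, e₀, e₁]
  field_simp
  ring

lemma tendsto_sq_add_add_two_sub_exp_mul (a : ℝ) :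
    Tendsto (fun t => t ^ 2 + t + 2 - exp (-a / (t - a)) * t ^ 3 / (t - a - 1)) atTop
      (𝓝 (1 - a + a ^ 2 / 2)) := by
  simpa using ((tendsto_sq_add_add_two_sub_quadratic_mul a).sub
    (tendsto_exp_sub_quadratic_mul a)).congr fun t => by ring

/-- with `α(N) = 1/(log N − a)`, `L(N) = e·α(N)·∫_2^N x^{−α(N)} dx` and
`Li(N) = ∫_2^N dt/log t`, the discrepancy satisfies
`(Li(N) − L(N))·log³N / N → 1 − a + a²/2` as `N → ∞`; in particular for `a = 1` the limit
is `1/2`. -/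
theorem Li_sub_L_limit (a : ℝ) :
    Tendsto (fun N : ℝ =>
        ((∫ t in (2 : ℝ)..N, 1 / Real.log t) -
            Real.exp 1 * (1 / (Real.log N - a)) *
              ∫ x in (2 : ℝ)..N, x ^ (-(1 / (Real.log N - a)))) *
          (Real.log N) ^ 3 / N)
      atTop (𝓝 (1 - a + a ^ 2 / 2)) ∧
    (a = 1 →
      Tendsto (fun N : ℝ =>
          ((∫ t in (2 : ℝ)..N, 1 / Real.log t) -
              Real.exp 1 * (1 / (Real.log N - a)) *
                ∫ x in (2 : ℝ)..N, x ^ (-(1 / (Real.log N - a)))) *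
            (Real.log N) ^ 3 / N)
        atTop (𝓝 (1 / 2))) := by
  have hlimit : Tendsto (fun N => (offsetLogIntegral N - benfordCount a N) * log N ^ 3 / N)
      atTop (𝓝 (1 - a + a ^ 2 / 2)) := by
    have h := (tendsto_offsetLogIntegral_mul_sub.sub (tendsto_benfordCount_mul_sub a)).add
      ((tendsto_sq_add_add_two_sub_exp_mul a).comp tendsto_log_atTop)
    rw [sub_zero, zero_add] at h
    exact h.congr fun N => by
      simp only [Function.comp_apply]
      ring
  refine ⟨hlimit, fun ha => ?_⟩
  subst ha
  rwa [show (1 : ℝ) - 1 + 1 ^ 2 / 2 = 1 / 2 by norm_num] at hlimit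
end

section
/- Fix a real number a and define, for large real N, the exponent β(N) = 1/(log(N/(2π)) − a) and the power-law approximation S(N) = (1/(2π·e·β(N)))·∫_2^N (x/(2π))^{β(N)} dx. Then S(N) is asymptotic to the main term of the Riemann zeros counting function: S(N) / ((N/(2π))·log(N/(2π))) → 1 as N → ∞. -/
open Real Filter Topology

/-!
With `y = N/(2π)`, `L = log y` and `β = 1/(L - a)`, the integral is elementary:
`∫_2^N (x/(2π))^β dx = 2π (y^(β+1) - (1/π)^(β+1))/(β+1)`. Since `βL = 1 + aβ`, we get
`y^β = e·e^(aβ)`, so the factor `e` in `S` cancels exactly and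
`S(N)/(yL) = (e^(aβ) - O(1/y))/((1 + β)(1 + aβ))`, which tends to `1` because `β → 0`.
-/

theorem integral_div_const_rpow {c b : ℝ} (hc : c ≠ 0) (hb : -1 < b) (x₀ N : ℝ) :
    ∫ x in x₀..N, (x / c) ^ b = c * (((N / c) ^ (b + 1) - (x₀ / c) ^ (b + 1)) / (b + 1)) := by
  rw [intervalIntegral.integral_comp_div (· ^ b) hc, integral_rpow (Or.inl hb), smul_eq_mul]

theorem rpow_eq_exp_one_add_of_mul_log_sub_eq_one {y a b : ℝ} (hy : 0 < y)
    (hb : b * (log y - a) = 1) : y ^ b = exp (1 + a * b) := by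
  rw [rpow_def_of_pos hy]
  congr 1
  linarith

theorem powerlaw_ratio_eq {a b c x₀ N : ℝ} (hc : 0 < c) (hN : 0 < N) (hb : 0 < b)
    (hbL : b * (log (N / c) - a) = 1) (hL : 0 < log (N / c)) :
    (1 / (c * exp 1 * b) * ∫ x in x₀..N, (x / c) ^ b) / (N / c * log (N / c)) =
      (exp (a * b) - (x₀ / c) ^ (b + 1) / (exp 1 * (N / c))) / ((b + 1) * (1 + a * b)) := by
  have hy : 0 < N / c := div_pos hN hc
  have hyb : (N / c) ^ (b + 1) = exp 1 * exp (a * b) * (N / c) := by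
    rw [rpow_add_one hy.ne', rpow_eq_exp_one_add_of_mul_log_sub_eq_one hy hbL, exp_add]
  have hlog : log (N / c) = (1 + a * b) / b := by
    field_simp
    linarith
  have hab : 0 < 1 + a * b := by
    rw [hlog] at hL
    exact (div_pos_iff_of_pos_right hb).1 hL
  rw [integral_div_const_rpow hc.ne' (by linarith), hyb, hlog]
  field_simp

theorem tendsto_powerlaw_ratio {a c x₀ : ℝ} (hc : 0 < c) {β : ℝ → ℝ}
    (hβ : Tendsto β atTop (𝓝 0)) :
    Tendsto (fun N => (exp (a * β N) - (x₀ / c) ^ (β N + 1) / (exp 1 * (N / c))) /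
      ((β N + 1) * (1 + a * β N))) atTop (𝓝 1) := by
  have hexp : Tendsto (fun N => exp (a * β N)) atTop (𝓝 1) := by
    simpa only [mul_zero, exp_zero, Function.comp_def] using
      (continuous_exp.tendsto _).comp (hβ.const_mul a)
  have hpow : Tendsto (fun N => (x₀ / c) ^ (β N + 1)) atTop (𝓝 ((x₀ / c) ^ (0 + 1 : ℝ))) :=
    (continuousAt_const_rpow' (by norm_num)).tendsto.comp (hβ.add_const 1)
  have hsmall : Tendsto (fun N => (x₀ / c) ^ (β N + 1) / (exp 1 * (N / c))) atTop (𝓝 0) :=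
    hpow.div_atTop ((tendsto_id.atTop_div_const hc).const_mul_atTop (exp_pos 1))
  have hden : Tendsto (fun N => (β N + 1) * (1 + a * β N)) atTop (𝓝 ((0 + 1) * (1 + a * 0))) :=
    (hβ.add_const 1).mul ((hβ.const_mul a).const_add 1)
  have h := (hexp.sub hsmall).div hden (by norm_num)
  rwa [show ((1 : ℝ) - 0) / ((0 + 1) * (1 + a * 0)) = 1 by simp] at h

/-- with `β(N) = 1/(log(N/(2π)) − a)`, the power-law approximation
`S(N) = (1/(2π·e·β(N)))·∫_2^N (x/(2π))^{β(N)} dx` is asymptotic to the main term of the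
Riemann zeros counting function: `S(N)/((N/(2π))·log(N/(2π))) → 1` as `N → ∞`. -/
theorem zeros_powerlaw_asymptotic (a : ℝ) :
    Tendsto (fun N : ℝ =>
        ((1 / (2 * π * Real.exp 1 * (1 / (Real.log (N / (2 * π)) - a)))) *
            ∫ x in (2 : ℝ)..N, (x / (2 * π)) ^ (1 / (Real.log (N / (2 * π)) - a))) /
          ((N / (2 * π)) * Real.log (N / (2 * π))))
      atTop (𝓝 1) := by
  have hc : (0 : ℝ) < 2 * π := by positivity
  have hlog : Tendsto (fun N => log (N / (2 * π))) atTop atTop :=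
    tendsto_log_atTop.comp (tendsto_id.atTop_div_const hc)
  have hlog_sub : Tendsto (fun N => log (N / (2 * π)) - a) atTop atTop := by
    simpa only [sub_eq_add_neg] using tendsto_atTop_add_const_right _ (-a) hlog
  have hβ : Tendsto (fun N => 1 / (log (N / (2 * π)) - a)) atTop (𝓝 0) :=
    hlog_sub.inv_tendsto_atTop.congr fun N => (one_div _).symm
  refine (tendsto_powerlaw_ratio (a := a) (x₀ := 2) hc hβ).congr' ?_
  filter_upwards [eventually_gt_atTop 0, hlog.eventually_gt_atTop a,
    hlog.eventually_gt_atTop 0] with N hN haL hL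
  have hLa : 0 < log (N / (2 * π)) - a := sub_pos.2 haL
  exact (powerlaw_ratio_eq hc hN (one_div_pos.2 hLa) (one_div_mul_cancel hLa.ne') hL).symm
end
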